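/- For every batch of N samples D : Fin N → ((i : Fin d) → Fin (m i)) and every partial assignment Q, the number of indices n : Fin N with ⟨enc (D n), mask Q⟩ = |dom Q| equals the number of indices n such that D n is consistent with Q; hence scanning a column of the result matrix and counting entries equal to |dom Q| correctly counts the samples in the batch containing all queried feature values. -/
import Mathlib


/-- One-hot encoding of a sample `a`. -/
def enc {d : ℕ} {m : Fin d → ℕ} (a : (i : Fin d) → Fin (m i)) :
    (Σ i : Fin d, Fin (m i)) → ℕ :=
  fun p => if a p.1 = p.2 then 1 else 0

/-- Mask of a partial assignment `Q`. -/
def mask {d : ℕ} {m : Fin d → ℕ} (Q : (i : Fin d) → Option (Fin (m i))) :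
    (Σ i : Fin d, Fin (m i)) → ℕ :=
  fun p => if Q p.1 = some p.2 then 1 else 0

/-- Domain of a partial assignment. -/
def dom {d : ℕ} {m : Fin d → ℕ} (Q : (i : Fin d) → Option (Fin (m i))) : Finset (Fin d) :=
  Finset.univ.filter fun i => Q i ≠ none

/-- Inner product of two vectors indexed by feature/value pairs. -/
def ip {d : ℕ} {m : Fin d → ℕ} (u v : (Σ i : Fin d, Fin (m i)) → ℕ) : ℕ :=
  ∑ p : Σ i : Fin d, Fin (m i), u p * v p

/-- A sample `a` is consistent with a partial assignment `Q`. -/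
def Consistent {d : ℕ} {m : Fin d → ℕ} (a : (i : Fin d) → Fin (m i))
    (Q : (i : Fin d) → Option (Fin (m i))) : Prop :=
  ∀ (i : Fin d) (j : Fin (m i)), Q i = some j → a i = j

instance {d : ℕ} {m : Fin d → ℕ} (a : (i : Fin d) → Fin (m i))
    (Q : (i : Fin d) → Option (Fin (m i))) : Decidable (Consistent a Q) :=
  inferInstanceAs (Decidable (∀ (i : Fin d) (j : Fin (m i)), Q i = some j → a i = j))

lemma ip_eq_card {d : ℕ} {m : Fin d → ℕ} (a : (i : Fin d) → Fin (m i))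
    (Q : (i : Fin d) → Option (Fin (m i))) :
    ip (enc a) (mask Q) = (Finset.univ.filter fun i => Q i = some (a i)).card := by
  unfold ip enc mask
  rw [← Finset.univ_sigma_univ, Finset.sum_sigma, Finset.card_filter]
  apply Finset.sum_congr rfl
  intro i _
  rcases h : Q i with _ | j
  · simp [h]
  · rw [Finset.sum_eq_single j]
    · rcases eq_or_ne (a i) j with hj | hj
      · simp [h, hj]
      · simp [h, hj, Ne.symm hj]
    · intro b _ hb
      by_cases hab : a i = b <;> simp [h, hab]
      · subst hab; simp [Ne.symm hb]
    · simp

lemma key {d : ℕ} {m : Fin d → ℕ} (a : (i : Fin d) → Fin (m i))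
    (Q : (i : Fin d) → Option (Fin (m i))) :
    ip (enc a) (mask Q) = (dom Q).card ↔ Consistent a Q := by
  rw [ip_eq_card]
  have hsub : (Finset.univ.filter fun i => Q i = some (a i)) ⊆ dom Q := by
    intro i hi
    simp only [Finset.mem_filter, dom, Finset.mem_univ, true_and] at *
    simp [hi]
  constructor
  · intro h i j hQ
    have heq := Finset.eq_of_subset_of_card_le hsub (le_of_eq h.symm)
    have : i ∈ dom Q := by simp [dom, hQ]
    rw [← heq] at this
    simp only [Finset.mem_filter] at this
    rw [hQ] at this
    exact Option.some_injective _ this.2.symm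
  · intro h
    congr 1
    ext i
    simp only [Finset.mem_filter, dom, Finset.mem_univ, true_and]
    constructor
    · intro hi; simp [hi]
    · intro hi
      rcases h' : Q i with _ | j
      · exact absurd h' hi
      · rw [h i j h']
  
theorem stmt_6 (d : ℕ) (hd : 1 ≤ d) (m : Fin d → ℕ) (hm : ∀ i, 1 ≤ m i)
    (N : ℕ) (D : Fin N → (i : Fin d) → Fin (m i))
    (Q : (i : Fin d) → Option (Fin (m i))) :
    (Finset.univ.filter fun n : Fin N =>
        ip (enc (D n)) (mask Q) = (dom Q).card).card =
    (Finset.univ.filter fun n : Fin N => Consistent (D n) Q).card := by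
  apply Finset.card_bij (fun n _ => n)
  · intro n hn
    simp only [Finset.mem_filter, Finset.mem_univ, true_and] at *
    exact (key (D n) Q).mp hn
  · intro n _ n' _ h; exact h
  · intro n hn
    simp only [Finset.mem_filter, Finset.mem_univ, true_and] at *
    exact ⟨n, (key (D n) Q).mpr hn, rfl⟩
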